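/- Let g be the 3-dimensional real Lie algebra with basis e₁, e₂, e₃ and brackets [e₁,e₃] = e₁, [e₂,e₃] = θ·e₂, [e₁,e₂] = 0, where θ is a nonzero real number with θ ≠ 1. Then the 6-dimensional product Lie algebra g × g admits no integrable complex structure: there is no linear map 𝒥 : g × g → g × g with 𝒥² = -id whose Nijenhuis tensor vanishes identically. -/

import Mathlib

/-!
Let `m ⊂ ℂ⁶` be the `i`-eigenspace of the complexified `𝒥`. It contains no nonzero real vector,
and integrability makes it a complex subalgebra. Counting dimensions, `m` meets the
complexified nilradical `𝔫 = span(e₁, e₂) × span(e₁, e₂)` nontrivially, and `m` also contains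
an `X` whose two `e₃`-coordinates `a, b` have non-real ratio. On `𝔫`, `ad X` is diagonal with
eigenvalues `-a, -θa, -b, -θb`, pairwise distinct because `θ ∉ {0, 1}`; so the `ad X`-stable
space `m ∩ 𝔫` contains an eigenvector, i.e. a standard basis vector, which is real.
-/

/-- Componentwise bracket on the product. -/
instance prodBracket {L : Type*} [LieRing L] : Bracket (L × L) (L × L) :=
  ⟨fun x y => (⁅x.1, y.1⁆, ⁅x.2, y.2⁆)⟩

instance prodLieRing {L : Type*} [LieRing L] : LieRing (L × L) where
  add_lie x y z := by ext <;> simp [Bracket.bracket]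
  lie_add x y z := by ext <;> simp [Bracket.bracket]
  lie_self x := by ext <;> simp [Bracket.bracket]
  leibniz_lie x y z := by ext <;> simp [Bracket.bracket]

instance prodLieAlgebra {L : Type*} [LieRing L] [LieAlgebra ℝ L] : LieAlgebra ℝ (L × L) where
  lie_smul t x y := by ext <;> simp [Bracket.bracket]

open Complex ComplexConjugate Matrix

namespace Matrix

variable {ι R : Type*} [Fintype ι]

def nijenhuis [CommRing R] (J : Matrix ι ι R) (br : (ι → R) → (ι → R) → ι → R)
    (x y : ι → R) : ι → R :=
  br x y + J *ᵥ br (J *ᵥ x) y + J *ᵥ br x (J *ᵥ y) - br (J *ᵥ x) (J *ᵥ y)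

def holomorphicSubspace (J : Matrix ι ι ℝ) : Submodule ℂ (ι → ℂ) :=
  Module.End.eigenspace (J.map ofReal).mulVecLin I

variable {J : Matrix ι ι ℝ}

theorem mem_holomorphicSubspace {v : ι → ℂ} :
    v ∈ J.holomorphicSubspace ↔ J.map ofReal *ᵥ v = I • v := by
  rw [holomorphicSubspace, Module.End.mem_eigenspace_iff, mulVecLin_apply]

theorem map_ofReal_mulVec (x : ι → ℝ) : J.map ofReal *ᵥ (ofReal ∘ x) = ofReal ∘ (J *ᵥ x) :=
  funext fun i => (RingHom.map_mulVec ofRealHom J x i).symm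

theorem re_map_ofReal_mulVec (v : ι → ℂ) (i : ι) :
    ((J.map ofReal *ᵥ v) i).re = (J *ᵥ (re ∘ v)) i := by
  simp [mulVec, dotProduct, re_sum]

theorem eq_zero_of_ofReal_mem_holomorphicSubspace {x : ι → ℝ}
    (hx : ofReal ∘ x ∈ J.holomorphicSubspace) : x = 0 := by
  rw [mem_holomorphicSubspace, map_ofReal_mulVec] at hx
  funext i
  simpa using (congrArg im (congrFun hx i)).symm

theorem exists_ne_zero_forall_eq_zero_mulVec (J : Matrix ι ι ℝ) (s : Finset ι)
    (hs : 2 * s.card < Fintype.card ι) :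
    ∃ x : ι → ℝ, x ≠ 0 ∧ ∀ i ∈ s, x i = 0 ∧ (J *ᵥ x) i = 0 := by
  let restrict : (ι → ℝ) →ₗ[ℝ] s → ℝ := LinearMap.funLeft ℝ ℝ Subtype.val
  have hker : LinearMap.ker (restrict.prod (restrict ∘ₗ J.mulVecLin)) ≠ ⊥ :=
    LinearMap.ker_ne_bot_of_finrank_lt (by simpa [two_mul] using hs)
  obtain ⟨x, hx, hx0⟩ := Submodule.exists_mem_ne_zero_of_ne_bot hker
  simp only [LinearMap.mem_ker, LinearMap.prod_apply, Function.prod, Prod.mk_eq_zero] at hx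
  exact ⟨x, hx0, fun i hi => ⟨congrFun hx.1 ⟨i, hi⟩, congrFun hx.2 ⟨i, hi⟩⟩⟩

variable [DecidableEq ι]

theorem single_one_notMem_holomorphicSubspace (i : ι) :
    Pi.single i 1 ∉ J.holomorphicSubspace := by
  intro h
  have hreal : Pi.single i (1 : ℂ) = ofReal ∘ Pi.single i 1 := by
    funext j
    by_cases j = i <;> simp_all
  rw [hreal] at h
  simpa using congrFun (eq_zero_of_ofReal_mem_holomorphicSubspace h) i

theorem mulVec_mulVec_eq_neg (hJ : J * J = -1) (x : ι → ℝ) : J *ᵥ (J *ᵥ x) = -x := by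
  rw [mulVec_mulVec, hJ, neg_mulVec, one_mulVec]

theorem mem_holomorphicSubspace_iff (hJ : J * J = -1) {v : ι → ℂ} :
    v ∈ J.holomorphicSubspace ↔ ∃ x : ι → ℝ, v = ofReal ∘ x - I • ofReal ∘ (J *ᵥ x) := by
  rw [mem_holomorphicSubspace]
  constructor
  · intro hv
    refine ⟨re ∘ v, funext fun i => ?_⟩
    have hre := congrArg re (congrFun hv i)
    rw [re_map_ofReal_mulVec] at hre
    apply Complex.ext <;> simp [hre]
  · rintro ⟨x, rfl⟩
    ext i
    simp only [mulVec_sub, map_ofReal_mulVec, mulVec_smul, mulVec_mulVec_eq_neg hJ, ofReal_comp_neg,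
      smul_neg, Pi.sub_apply, Function.comp_apply, Pi.neg_apply, Pi.smul_apply, smul_eq_mul,
      sub_neg_eq_add]
    linear_combination ((J *ᵥ x) i : ℂ) * I_sq

theorem bracket_mem_holomorphicSubspace (hJ : J * J = -1)
    {bR : (ι → ℝ) → (ι → ℝ) → ι → ℝ} {bC : (ι → ℂ) →ₗ[ℂ] (ι → ℂ) →ₗ[ℂ] ι → ℂ}
    (hb : ∀ x y, bC (ofReal ∘ x) (ofReal ∘ y) = ofReal ∘ bR x y)
    (hN : ∀ x y, J.nijenhuis bR x y = 0) {u w : ι → ℂ}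
    (hu : u ∈ J.holomorphicSubspace) (hw : w ∈ J.holomorphicSubspace) :
    bC u w ∈ J.holomorphicSubspace := by
  rw [mem_holomorphicSubspace_iff hJ] at hu hw ⊢
  obtain ⟨x, rfl⟩ := hu
  obtain ⟨y, rfl⟩ := hw
  refine ⟨bR x y - bR (J *ᵥ x) (J *ᵥ y), ?_⟩
  -- `nijenhuis J bR x y = 0` says that the bracket's imaginary part is `-J` of its real part.
  have hJz : J *ᵥ (bR x y - bR (J *ᵥ x) (J *ᵥ y)) = bR (J *ᵥ x) y + bR x (J *ᵥ y) := by
    have h := congrArg (J *ᵥ ·) (hN x y)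
    simp only [nijenhuis, mulVec_add, mulVec_sub, mulVec_mulVec_eq_neg hJ, mulVec_zero] at h
    rw [mulVec_sub]
    linear_combination h
  rw [hJz]
  simp only [map_sub, map_smul, LinearMap.sub_apply, LinearMap.smul_apply, hb]
  ext i
  simp only [Pi.sub_apply, Function.comp_apply, Pi.smul_apply, smul_eq_mul, ofReal_comp_sub,
    ofReal_comp_add, smul_add, Pi.add_apply]
  linear_combination (bR (J *ᵥ x) (J *ᵥ y) i : ℂ) * I_sq

theorem exists_mul_mulVec_ne_mulVec_mul (hJ : J * J = -1) {l r : ι} (hlr : l ≠ r) :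
    ∃ x : ι → ℝ, x l * (J *ᵥ x) r ≠ (J *ᵥ x) l * x r := by
  by_contra! h
  have hlr' : J l r = 0 := by simpa [hlr.symm] using (h (Pi.single r 1)).symm
  have hrow : ∀ m ≠ l, J l m = 0 := by
    intro m hm
    rcases eq_or_ne m r with rfl | hmr
    · exact hlr'
    · have h2 := h (Pi.single r 1 + Pi.single m 1)
      simpa [mulVec_add, hlr.symm, hm.symm, hmr.symm, hlr'] using h2.symm
  have hll : (J * J) l l = J l l * J l l := by
    rw [mul_apply]
    exact Finset.sum_eq_single l (fun m _ hm => by rw [hrow m hm, zero_mul]) (by simp)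
  rw [hJ, neg_apply, one_apply_eq] at hll
  nlinarith [mul_self_nonneg (J l l)]

theorem exists_mem_holomorphicSubspace_ne_zero_forall_eq_zero (hJ : J * J = -1) (s : Finset ι)
    (hs : 2 * s.card < Fintype.card ι) :
    ∃ u ∈ J.holomorphicSubspace, u ≠ 0 ∧ ∀ i ∈ s, u i = 0 := by
  obtain ⟨x, hx0, hx⟩ := J.exists_ne_zero_forall_eq_zero_mulVec s hs
  refine ⟨_, (mem_holomorphicSubspace_iff hJ).2 ⟨x, rfl⟩, fun h => hx0 ?_, fun i hi => ?_⟩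
  · funext i
    simpa using congrArg re (congrFun h i)
  · simp [(hx i hi).1, (hx i hi).2]

theorem exists_mem_holomorphicSubspace_im_mul_conj_ne_zero (hJ : J * J = -1) {l r : ι}
    (hlr : l ≠ r) : ∃ X ∈ J.holomorphicSubspace, (X l * conj (X r)).im ≠ 0 := by
  obtain ⟨x, hx⟩ := exists_mul_mulVec_ne_mulVec_mul hJ hlr
  refine ⟨_, (mem_holomorphicSubspace_iff hJ).2 ⟨x, rfl⟩, ?_⟩
  simpa [sub_eq_add_neg] using sub_ne_zero.mpr hx

end Matrix

theorem Complex.ne_ofReal_mul_of_im_mul_conj_ne_zero {a b : ℂ} (h : (a * conj b).im ≠ 0)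
    (t : ℝ) : a ≠ t * b := by
  rintro rfl
  apply h
  simp [mul_assoc, mul_conj]

open Finset in
theorem Submodule.exists_single_mem_of_mul_mem {K ι : Type*} [Field K] [Fintype ι]
    [DecidableEq ι] {S : Submodule K (ι → K)} {d : ι → K} (hS : ∀ v ∈ S, d * v ∈ S)
    {u : ι → K} (hu : u ∈ S) (hu0 : u ≠ 0) (hd : Set.InjOn d (Function.support u)) :
    ∃ i, Pi.single i 1 ∈ S := by
  classical
  have hprod : ∀ s : Finset ι, (∏ j ∈ s, (d - fun _ => d j)) * u ∈ S := by
    intro s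
    induction s using Finset.induction_on with
    | empty => simpa using hu
    | insert j s hj ih =>
      rw [prod_insert hj, mul_assoc, sub_mul]
      exact S.sub_mem (hS _ ih) (S.smul_mem (d j) ih)
  obtain ⟨i, hi⟩ := Function.ne_iff.mp hu0
  set s := (univ.filter fun j => u j ≠ 0).erase i
  set w := (∏ j ∈ s, (d - fun _ => d j)) * u
  have hw : w = Pi.single i (w i) := by
    funext k
    rcases eq_or_ne k i with rfl | hki
    · simp
    rw [Pi.single_eq_of_ne hki]
    by_cases huk : u k = 0
    · simp [w, huk]
    · simp only [w, Pi.mul_apply, prod_apply, Pi.sub_apply]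
      rw [prod_eq_zero (i := k) (by simp [s, hki, huk]) (sub_self _), zero_mul]
  have hwi : w i ≠ 0 := by
    simp only [w, Pi.mul_apply, prod_apply, Pi.sub_apply]
    refine mul_ne_zero (prod_ne_zero_iff.mpr fun j hj => sub_ne_zero.mpr fun h => ?_) hi
    simp only [s, mem_erase, mem_filter, mem_univ, true_and] at hj
    exact hj.1 (hd hj.2 hi h.symm)
  have hwS : Pi.single i (w i) ∈ S := hw ▸ hprod s
  refine ⟨i, ?_⟩
  rw [← inv_mul_cancel₀ hwi, ← smul_eq_mul, Pi.single_smul']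
  exact S.smul_mem _ hwS

section Bianchi

variable {R : Type*} [CommRing R]

def bianchiBracket (θ : R) (x y : Fin 3 → R) : Fin 3 → R :=
  ![x 0 * y 2 - x 2 * y 0, θ * (x 1 * y 2 - x 2 * y 1), 0]

def bianchiProdBracket (θ : R) :
    (Fin 3 ⊕ Fin 3 → R) →ₗ[R] (Fin 3 ⊕ Fin 3 → R) →ₗ[R] Fin 3 ⊕ Fin 3 → R :=
  LinearMap.mk₂ R
    (fun x y => Sum.elim (bianchiBracket θ (x ∘ .inl) (y ∘ .inl))
      (bianchiBracket θ (x ∘ .inr) (y ∘ .inr)))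
    (by intros; ext (i | i) <;> fin_cases i <;> simp [bianchiBracket] <;> ring)
    (by intros; ext (i | i) <;> fin_cases i <;> simp [bianchiBracket] <;> ring)
    (by intros; ext (i | i) <;> fin_cases i <;> simp [bianchiBracket] <;> ring)
    (by intros; ext (i | i) <;> fin_cases i <;> simp [bianchiBracket] <;> ring)

theorem comp_bianchiProdBracket {S : Type*} [CommRing S] (f : R →+* S) (θ : R)
    (x y : Fin 3 ⊕ Fin 3 → R) :
    f ∘ bianchiProdBracket θ x y = bianchiProdBracket (f θ) (f ∘ x) (f ∘ y) := by
  ext (i | i) <;> fin_cases i <;> simp [bianchiProdBracket, bianchiBracket]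

def bianchiWeights (θ a b : R) : Fin 3 ⊕ Fin 3 → R :=
  Sum.elim ![a, θ * a, 0] ![b, θ * b, 0]

theorem bianchiProdBracket_eq_neg_weights_mul (θ : R) (X : Fin 3 ⊕ Fin 3 → R)
    {v : Fin 3 ⊕ Fin 3 → R} (hl : v (.inl 2) = 0) (hr : v (.inr 2) = 0) :
    bianchiProdBracket θ X v = -(bianchiWeights θ (X (.inl 2)) (X (.inr 2)) * v) := by
  ext (i | i) <;> fin_cases i <;>
    simp [bianchiProdBracket, bianchiBracket, bianchiWeights, hl, hr] <;> ring

end Bianchi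

theorem injOn_bianchiWeights {θ : ℝ} (hθ0 : θ ≠ 0) (hθ1 : θ ≠ 1) {a b : ℂ}
    (hab : (a * conj b).im ≠ 0) :
    Set.InjOn (bianchiWeights (θ : ℂ) a b) {j | j ≠ .inl 2 ∧ j ≠ .inr 2} := by
  have hba : (b * conj a).im ≠ 0 := by
    rwa [← conj_conj b, ← map_mul, conj_im, neg_ne_zero, mul_comm]
  have h1 := ne_ofReal_mul_of_im_mul_conj_ne_zero hab
  have h2 := ne_ofReal_mul_of_im_mul_conj_ne_zero hba
  have ha0 : a ≠ 0 := by simpa using h1 0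
  have hb0 : b ≠ 0 := by simpa using h2 0
  have hθ0' : (θ : ℂ) ≠ 0 := ofReal_ne_zero.mpr hθ0
  have hθ1' : (θ : ℂ) ≠ 1 := by exact_mod_cast hθ1
  clear hab hba
  rintro (i | i) ⟨hi1, hi2⟩ (j | j) ⟨hj1, hj2⟩ h <;> fin_cases i <;> fin_cases j <;>
    simp_all [bianchiWeights] <;> first | exact h1 θ h.symm | exact h2 θ h.symm

theorem bianchiProdBracket_not_integrable {θ : ℝ} (hθ0 : θ ≠ 0) (hθ1 : θ ≠ 1)
    {J : Matrix (Fin 3 ⊕ Fin 3) (Fin 3 ⊕ Fin 3) ℝ} (hJ : J * J = -1)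
    (hN : ∀ x y, J.nijenhuis (bianchiProdBracket θ · ·) x y = 0) : False := by
  set m := J.holomorphicSubspace
  let 𝔫 : Submodule ℂ (Fin 3 ⊕ Fin 3 → ℂ) :=
    LinearMap.ker (LinearMap.proj (.inl 2)) ⊓ LinearMap.ker (LinearMap.proj (.inr 2))
  have mem_𝔫 : ∀ v, v ∈ 𝔫 ↔ v (.inl 2) = 0 ∧ v (.inr 2) = 0 := fun v => by simp [𝔫]
  obtain ⟨u, hu, hu0, hu𝔫⟩ :=
    J.exists_mem_holomorphicSubspace_ne_zero_forall_eq_zero hJ {.inl 2, .inr 2} (by decide)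
  obtain ⟨X, hX, hXim⟩ :=
    J.exists_mem_holomorphicSubspace_im_mul_conj_ne_zero hJ (l := .inl 2) (r := .inr 2) (by simp)
  set d := bianchiWeights (θ : ℂ) (X (.inl 2)) (X (.inr 2))
  have hS : ∀ v ∈ m ⊓ 𝔫, d * v ∈ m ⊓ 𝔫 := by
    intro v hv
    obtain ⟨hvm, hv𝔫⟩ := Submodule.mem_inf.1 hv
    rw [mem_𝔫] at hv𝔫
    have hXv : bianchiProdBracket (θ : ℂ) X v ∈ m :=
      bracket_mem_holomorphicSubspace hJ (fun x y => (comp_bianchiProdBracket ofRealHom θ x y).symm)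
        hN hX hvm
    rw [bianchiProdBracket_eq_neg_weights_mul _ _ hv𝔫.1 hv𝔫.2] at hXv
    exact Submodule.mem_inf.2 ⟨neg_neg (d * v) ▸ m.neg_mem hXv, (mem_𝔫 _).2 (by simp [hv𝔫])⟩
  have hd : Set.InjOn d (Function.support u) :=
    (injOn_bianchiWeights hθ0 hθ1 hXim).mono fun j hj => by
      constructor <;> rintro rfl <;> exact hj (hu𝔫 _ (by simp))
  obtain ⟨i, hi⟩ := Submodule.exists_single_mem_of_mul_mem hS
    (Submodule.mem_inf.2 ⟨hu, (mem_𝔫 u).2 ⟨hu𝔫 _ (by simp), hu𝔫 _ (by simp)⟩⟩) hu0 hd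
  exact single_one_notMem_holomorphicSubspace i (Submodule.mem_inf.1 hi).1

theorem LinearMap.toMatrix_nijenhuis_eq_zero {ι R M : Type*} [Fintype ι] [DecidableEq ι]
    [CommRing R] [AddCommGroup M] [Module R M] [Bracket M M] (B : Module.Basis ι R M)
    {br : (ι → R) → (ι → R) → ι → R}
    (hbr : ∀ v w, B.equivFun ⁅v, w⁆ = br (B.equivFun v) (B.equivFun w)) {J : M →ₗ[R] M}
    (hN : ∀ v w, ⁅v, w⁆ + J ⁅J v, w⁆ + J ⁅v, J w⁆ - ⁅J v, J w⁆ = 0) (x y : ι → R) :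
    (toMatrix B B J).nijenhuis br x y = 0 := by
  have hJ : ∀ v, toMatrix B B J *ᵥ B.equivFun v = B.equivFun (J v) := by
    simpa using toMatrix_mulVec_repr B B J
  obtain ⟨v, rfl⟩ := B.equivFun.surjective x
  obtain ⟨w, rfl⟩ := B.equivFun.surjective y
  simp only [nijenhuis, hJ, ← hbr, ← map_add, ← map_sub, hN, map_zero]

section Transfer

variable {g : Type*} [LieRing g] [LieAlgebra ℝ g] (b : Module.Basis (Fin 3) ℝ g) {θ : ℝ}

theorem Module.Basis.equivFun_lie_eq_bianchiBracket (h13 : ⁅b 0, b 2⁆ = b 0)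
    (h23 : ⁅b 1, b 2⁆ = θ • b 1) (h12 : ⁅b 0, b 1⁆ = 0) (x y : g) :
    b.equivFun ⁅x, y⁆ = bianchiBracket θ (b.equivFun x) (b.equivFun y) := by
  obtain ⟨c, rfl⟩ := b.equivFun.symm.surjective x
  obtain ⟨d, rfl⟩ := b.equivFun.symm.surjective y
  have h31 : ⁅b 2, b 0⁆ = -b 0 := by rw [← lie_skew, h13]
  have h32 : ⁅b 2, b 1⁆ = -(θ • b 1) := by rw [← lie_skew, h23]
  have h21 : ⁅b 1, b 0⁆ = 0 := by rw [← lie_skew, h12, neg_zero]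
  simp only [Basis.equivFun_symm_apply, Fin.sum_univ_three, add_lie, lie_add, smul_lie, lie_smul,
    lie_self, h13, h23, h12, h31, h32, h21]
  ext i; fin_cases i <;> simp [bianchiBracket] <;> ring

theorem Module.Basis.equivFun_prod_lie_eq_bianchiProdBracket (h13 : ⁅b 0, b 2⁆ = b 0)
    (h23 : ⁅b 1, b 2⁆ = θ • b 1) (h12 : ⁅b 0, b 1⁆ = 0) (x y : g × g) :
    (b.prod b).equivFun ⁅x, y⁆ =
      bianchiProdBracket θ ((b.prod b).equivFun x) ((b.prod b).equivFun y) := by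
  have hl : ∀ z : g × g, ⇑((b.prod b).repr z) ∘ Sum.inl = b.repr z.1 :=
    fun z => funext (b.prod_repr_inl b z)
  have hr : ∀ z : g × g, ⇑((b.prod b).repr z) ∘ Sum.inr = b.repr z.2 :=
    fun z => funext (b.prod_repr_inr b z)
  ext (i | i)
  · simpa [bianchiProdBracket, hl] using
      congrFun (b.equivFun_lie_eq_bianchiBracket h13 h23 h12 x.1 y.1) i
  · simpa [bianchiProdBracket, hr] using
      congrFun (b.equivFun_lie_eq_bianchiBracket h13 h23 h12 x.2 y.2) i

end Transfer

theorem bianchi4_theta_ne_one_no_complex_structure {g : Type*} [LieRing g] [LieAlgebra ℝ g]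
    (b : Module.Basis (Fin 3) ℝ g) (θ : ℝ) (hθ0 : θ ≠ 0) (hθ1 : θ ≠ 1)
    (h13 : ⁅b 0, b 2⁆ = b 0) (h23 : ⁅b 1, b 2⁆ = θ • b 1) (h12 : ⁅b 0, b 1⁆ = 0) :
    ¬ ∃ 𝒥 : (g × g) →ₗ[ℝ] (g × g), (∀ x, 𝒥 (𝒥 x) = -x) ∧
      ∀ x y : g × g,
        ⁅x, y⁆ + 𝒥 ⁅𝒥 x, y⁆ + 𝒥 ⁅x, 𝒥 y⁆ - ⁅𝒥 x, 𝒥 y⁆ = 0 := by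
  rintro ⟨𝒥, h𝒥, hN⟩
  have hsq : 𝒥 * 𝒥 = -1 := LinearMap.ext h𝒥
  have hJ : LinearMap.toMatrix (b.prod b) (b.prod b) 𝒥 * LinearMap.toMatrix (b.prod b) (b.prod b) 𝒥
      = -1 := by
    rw [← LinearMap.toMatrix_mul, hsq, map_neg, LinearMap.toMatrix_one]
  exact bianchiProdBracket_not_integrable hθ0 hθ1 hJ <| LinearMap.toMatrix_nijenhuis_eq_zero _
    (b.equivFun_prod_lie_eq_bianchiProdBracket h13 h23 h12) hN
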